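/- Let D be a real m×m matrix and u ≠ 1 a simple eigenvalue of D whose eigenvector v has all components nonzero and satisfies Σ v_i ≠ 0 (a 'general' eigenvalue). Then there exist unique disjoint subsets I_+, I_- ⊆ {0,...,m} with I_+ ∪ I_- = {0,...,m} and 0 ∈ I_+, such that with t = 1/(1-u) there are points α ∈ relint Δ_{I_+}, β ∈ relint Δ_{I_-} satisfying (tD + (1-t)I_m)α = (tD + (1-t)I_m)β, where Δ_I = conv{e_i : i ∈ I} with e_0 := 0. -/

import Mathlib

/-!
With `t = 1 / (1 - u)` the matrix `t D + (1 - t) I` equals `t (D - u I)`, so two points of the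
simplex `Δ_{0,…,m}` have the same image exactly when their difference lies in the
`u`-eigenspace, which is the line `ℝ v` because `u` is simple. In barycentric coordinates a
difference of two probability vectors has coordinate sum `0`, so it is a multiple of
`r = (-∑ vᵢ, v₁, …, vₘ)`, the affine dependence of `e₀, …, eₘ` attached to `v`. Two such
probability vectors with complementary supports are then, up to scaling, the positive and
negative parts of a multiple of `r`: the supports are the sign classes of `r` (all nonzero),
labelled so that `0` lies in `I₊`. Conversely the normalised positive and negative parts of
`r₀ • r` give a solution.
-/

namespace LinearMap

variable {K V : Type*} [Field K] [AddCommGroup V] [Module K V] [FiniteDimensional K V]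

theorem eigenspace_eq_span_singleton_of_rootMultiplicity_le_one {f : Module.End K V} {μ : K}
    (h : f.charpoly.rootMultiplicity μ ≤ 1) {v : V} (hv : v ∈ f.eigenspace μ)
    (hv0 : v ≠ 0) :
    f.eigenspace μ = K ∙ v := by
  refine eq_span_singleton_of_mem_of_finrank_eq_one ?_ hv hv0
  refine le_antisymm ((finrank_eigenspace_le f μ).trans h) ?_
  exact Submodule.one_le_finrank_iff.2 fun hbot => hv0 (by simpa [hbot] using hv)

end LinearMap

namespace Matrix

variable {n R : Type*} [DecidableEq n] [Field R]

theorem smul_add_one_sub_smul_one {u : R} (hu : u ≠ 1) (D : Matrix n n R) :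
    (1 / (1 - u)) • D + (1 - 1 / (1 - u)) • (1 : Matrix n n R) =
      (1 / (1 - u)) • (D - u • 1) := by
  have h : 1 - 1 / (1 - u) = -(1 / (1 - u) * u) := by
    field_simp [sub_ne_zero.2 hu.symm]
    ring
  rw [h, smul_sub, neg_smul, mul_smul, ← sub_eq_add_neg]

theorem mulVec_eq_mulVec_iff_sub_mem_eigenspace [Fintype n] {u : R} (hu : u ≠ 1)
    (D : Matrix n n R) (x y : n → R) :
    ((1 / (1 - u)) • D + (1 - 1 / (1 - u)) • (1 : Matrix n n R)) *ᵥ x =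
        ((1 / (1 - u)) • D + (1 - 1 / (1 - u)) • (1 : Matrix n n R)) *ᵥ y ↔
      x - y ∈ Module.End.eigenspace (toLin' D) u := by
  rw [smul_add_one_sub_smul_one hu, ← sub_eq_zero, ← mulVec_sub, smul_mulVec, smul_eq_zero,
    Module.End.mem_eigenspace_iff, toLin'_apply, sub_mulVec, smul_mulVec, one_mulVec, sub_eq_zero]
  simp [sub_ne_zero.2 hu.symm]

end Matrix

namespace Fin

variable {R : Type*} [CommRing R] {m : ℕ}

theorem sum_smul_eq_tail {e : Fin (m + 1) → Fin m → R} (he0 : e 0 = 0)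
    (he : ∀ j, e j.succ = Pi.single j 1) (a : Fin (m + 1) → R) :
    ∑ i, a i • e i = Fin.tail a := by
  ext j
  simp [Fin.sum_univ_succ, he0, he, Pi.single_apply, Fin.tail]

theorem eq_smul_cons_of_sum_eq_zero {x : Fin (m + 1) → R} (hx : ∑ i, x i = 0) {c : R}
    {v : Fin m → R} (h : Fin.tail x = c • v) : x = c • Fin.cons (-∑ i, v i) v := by
  rw [Fin.sum_univ_succ] at hx
  ext i
  induction i using Fin.cases with
  | zero =>
    have : ∑ i : Fin m, x i.succ = c * ∑ i, v i := by
      rw [Finset.mul_sum]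
      exact Finset.sum_congr rfl fun j _ => congrFun h j
    simp only [Pi.smul_apply, cons_zero, smul_eq_mul]
    linear_combination hx - this
  | succ j => simpa [Fin.tail] using congrFun h j

end Fin

theorem Matrix.mulVec_sum_smul_eq_iff_sub_eq_smul {R : Type*} [Field R] {m : ℕ}
    {D : Matrix (Fin m) (Fin m) R} {u : R} (hu : u ≠ 1) {v : Fin m → R}
    (hspan : Module.End.eigenspace (toLin' D) u = R ∙ v) {e : Fin (m + 1) → Fin m → R}
    (he0 : e 0 = 0) (he : ∀ j, e j.succ = Pi.single j 1) {a b : Fin (m + 1) → R}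
    (hab : ∑ i, a i = ∑ i, b i) :
    ((1 / (1 - u)) • D + (1 - 1 / (1 - u)) • (1 : Matrix (Fin m) (Fin m) R)).mulVec
          (∑ i, a i • e i) =
        ((1 / (1 - u)) • D + (1 - 1 / (1 - u)) • (1 : Matrix (Fin m) (Fin m) R)).mulVec
          (∑ i, b i • e i) ↔
      ∃ c : R, a - b = c • Fin.cons (-∑ i, v i) v := by
  rw [mulVec_eq_mulVec_iff_sub_mem_eigenspace hu, Fin.sum_smul_eq_tail he0 he,
    Fin.sum_smul_eq_tail he0 he, hspan, Submodule.mem_span_singleton]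
  constructor
  · rintro ⟨c, hc⟩
    exact ⟨c, Fin.eq_smul_cons_of_sum_eq_zero (by simp [Finset.sum_sub_distrib, hab]) hc.symm⟩
  · rintro ⟨c, hc⟩
    exact ⟨c, (congrArg Fin.tail hc).symm⟩

theorem pos_mul_iff_pos_mul_of_mul_pos {α : Type*} [CommRing α] [LinearOrder α]
    [IsStrictOrderedRing α] {c d : α} (h : 0 < c * d) (x : α) :
    0 < c * x ↔ 0 < d * x := by
  rcases eq_or_ne x 0 with rfl | hx
  · simp
  refine pos_iff_pos_of_mul_pos ?_
  calc (0 : α) < c * d * (x * x) := mul_pos h (mul_self_pos.2 hx)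
    _ = c * x * (d * x) := by ring

theorem Finset.mem_iff_pos_sub_of_isCompl {ι α : Type*} [Fintype ι] [DecidableEq ι]
    [AddCommGroup α] [LinearOrder α] [IsOrderedAddMonoid α] {s t : Finset ι}
    (hst : IsCompl s t) {a b : ι → α} (ha : ∀ i ∈ s, 0 < a i) (ha' : ∀ i ∉ s, a i = 0)
    (hb : ∀ i ∈ t, 0 < b i) (hb' : ∀ i ∉ t, b i = 0) (i : ι) :
    i ∈ s ↔ 0 < a i - b i := by
  by_cases hi : i ∈ s
  · rw [hb' i (Finset.disjoint_left.1 hst.disjoint hi), sub_zero]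
    exact iff_of_true hi (ha i hi)
  · have hit : i ∈ t := hst.compl_eq ▸ Finset.mem_compl.2 hi
    rw [ha' i hi, zero_sub, neg_pos]
    exact iff_of_false hi (hb i hit).not_gt

theorem Finset.eq_filter_of_sub_eq_smul_of_isCompl {ι α : Type*} [Fintype ι] [DecidableEq ι]
    [CommRing α] [LinearOrder α] [IsStrictOrderedRing α] {s t : Finset ι} (hst : IsCompl s t)
    {a b : ι → α} (ha : ∀ i ∈ s, 0 < a i) (ha' : ∀ i ∉ s, a i = 0) (hb : ∀ i ∈ t, 0 < b i)
    (hb' : ∀ i ∉ t, b i = 0) {c : α} {x : ι → α} (hc : a - b = c • x) {i₀ : ι} (hi₀ : i₀ ∈ s) :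
    s = ({i | 0 < x i₀ * x i} : Finset ι) := by
  have hmem : ∀ i, i ∈ s ↔ 0 < c * x i := fun i => by
    rw [mem_iff_pos_sub_of_isCompl hst ha ha' hb hb', ← Pi.sub_apply, hc]
    rfl
  ext i
  rw [hmem, pos_mul_iff_pos_mul_of_mul_pos ((hmem i₀).1 hi₀), mem_filter]
  exact (and_iff_right (mem_univ i)).symm

theorem exists_weights_sub_eq_smul_of_sum_eq_zero {ι α : Type*} [Fintype ι] [DecidableEq ι]
    [Field α] [LinearOrder α] [IsStrictOrderedRing α] {x : ι → α} (hx : ∀ i, x i ≠ 0)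
    (hsum : ∑ i, x i = 0) {s : Finset ι} (hs : ∀ i, i ∈ s ↔ 0 < x i) {i₀ : ι}
    (hi₀ : 0 < x i₀) :
    ∃ a b : ι → α,
      (∀ i ∈ s, 0 < a i) ∧ (∀ i ∉ s, a i = 0) ∧ ∑ i, a i = 1 ∧
      (∀ i ∈ sᶜ, 0 < b i) ∧ (∀ i ∉ sᶜ, b i = 0) ∧ ∑ i, b i = 1 ∧
      ∃ c : α, a - b = c • x := by
  set N := ∑ i, (x i)⁺
  have hN : 0 < N := Finset.sum_pos' (fun i _ => posPart_nonneg _)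
    ⟨i₀, Finset.mem_univ _, by rwa [posPart_eq_self.2 hi₀.le]⟩
  have hneg : ∑ i, (x i)⁻ = N := by
    have : N - ∑ i, (x i)⁻ = ∑ i, x i := by
      rw [← Finset.sum_sub_distrib]
      exact Finset.sum_congr rfl fun i _ => posPart_sub_negPart _
    linarith
  refine ⟨fun i => (x i)⁺ / N, fun i => (x i)⁻ / N, fun i hi => ?_, fun i hi => ?_,
    by rw [← Finset.sum_div, div_self hN.ne'], fun i hi => ?_, fun i hi => ?_,
    by rw [← Finset.sum_div, hneg, div_self hN.ne'], N⁻¹, ?_⟩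
  · dsimp only
    rw [posPart_eq_self.2 ((hs i).1 hi).le]
    exact div_pos ((hs i).1 hi) hN
  · dsimp only
    rw [posPart_eq_zero.2 (not_lt.1 (mt (hs i).2 hi)), zero_div]
  · have hxi : x i < 0 := (not_lt.1 (mt (hs i).2 (Finset.mem_compl.1 hi))).lt_of_ne (hx i)
    dsimp only
    rw [negPart_eq_neg.2 hxi.le]
    exact div_pos (neg_pos.2 hxi) hN
  · dsimp only
    rw [negPart_eq_zero.2 ((hs i).1 (Finset.notMem_compl.1 hi)).le, zero_div]
  · ext i
    rw [Pi.sub_apply, ← sub_div, posPart_sub_negPart, Pi.smul_apply, smul_eq_mul, div_eq_inv_mul]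

/-- A general eigenvalue `u ≠ 1` of `D` (simple, eigenvector with nonvanishing
components whose components do not sum to zero) determines a unique bipartition
`I_+ ⊔ I_- = {0,…,m}` with `0 ∈ I_+` such that the simplices `Δ_{I_+}` and `Δ_{I_-}`
deformed to time `t = 1/(1-u)` intersect (in their relative interiors, i.e. there are
positive convex combinations with equal image under `tD + (1-t)I`). -/
theorem stmt1 (m : ℕ) (D : Matrix (Fin m) (Fin m) ℝ)
    (e : Fin (m + 1) → Fin m → ℝ)
    (he0 : e 0 = 0)
    (he : ∀ i : Fin (m + 1), ∀ h : 0 < (i : ℕ),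
      e i = Pi.single (⟨(i : ℕ) - 1, by have := i.isLt; omega⟩ : Fin m) 1)
    (u : ℝ) (hu1 : u ≠ 1)
    (hsimple : D.charpoly.rootMultiplicity u = 1)
    (v : Fin m → ℝ) (hev : D.mulVec v = u • v)
    (hvnz : ∀ i, v i ≠ 0) (hvsum : ∑ i, v i ≠ 0) :
    ∃! P : Finset (Fin (m + 1)) × Finset (Fin (m + 1)),
      Disjoint P.1 P.2 ∧ P.1 ∪ P.2 = Finset.univ ∧ (0 : Fin (m + 1)) ∈ P.1 ∧
      ∃ a b : Fin (m + 1) → ℝ,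
        (∀ i ∈ P.1, 0 < a i) ∧ (∀ i ∉ P.1, a i = 0) ∧ (∑ i, a i = 1) ∧
        (∀ i ∈ P.2, 0 < b i) ∧ (∀ i ∉ P.2, b i = 0) ∧ (∑ i, b i = 1) ∧
        ((1 / (1 - u)) • D + (1 - 1 / (1 - u)) • (1 : Matrix (Fin m) (Fin m) ℝ)).mulVec
            (∑ i, a i • e i)
          = ((1 / (1 - u)) • D + (1 - 1 / (1 - u)) • (1 : Matrix (Fin m) (Fin m) ℝ)).mulVec
            (∑ i, b i • e i) := by
  classical
  have he' : ∀ j : Fin m, e j.succ = Pi.single j 1 := fun j => by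
    rw [he j.succ j.succ_pos]
    congr
  set r : Fin (m + 1) → ℝ := Fin.cons (-∑ i, v i) v with hr
  have hr_ne : ∀ i, r i ≠ 0 := Fin.cases (neg_ne_zero.2 hvsum) hvnz
  have hr_sum : ∑ i, r i = 0 := by simp [hr, Fin.sum_univ_succ]
  have hspan : Module.End.eigenspace (Matrix.toLin' D) u = ℝ ∙ v :=
    LinearMap.eigenspace_eq_span_singleton_of_rootMultiplicity_le_one
      (by rw [Matrix.charpoly_toLin', hsimple]) (Module.End.mem_eigenspace_iff.2 hev)
      (fun h => hvsum (by simp [h]))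
  have hsame {a b : Fin (m + 1) → ℝ} (ha : ∑ i, a i = 1) (hb : ∑ i, b i = 1) :=
    Matrix.mulVec_sum_smul_eq_iff_sub_eq_smul hu1 hspan he0 he' (ha.trans hb.symm)
  -- Rescaling `r` by `r 0` makes the coordinate of the vertex `e 0` positive.
  set s : Finset (Fin (m + 1)) := {i | 0 < r 0 * r i}
  have hs : ∀ i, i ∈ s ↔ 0 < (r 0 • r) i := by simp [s]
  obtain ⟨a, b, ha, ha', hsa, hb, hb', hsb, c, hc⟩ :=
    exists_weights_sub_eq_smul_of_sum_eq_zero (x := r 0 • r)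
      (fun i => mul_ne_zero (hr_ne 0) (hr_ne i))
      (by simp only [Pi.smul_apply, smul_eq_mul, ← Finset.mul_sum, hr_sum, mul_zero]) hs
      (mul_self_pos.2 (hr_ne 0))
  refine ⟨(s, sᶜ), ⟨disjoint_compl_right, Finset.union_compl s,
    (hs 0).2 (mul_self_pos.2 (hr_ne 0)), a, b, ha, ha', hsa, hb, hb', hsb,
    (hsame hsa hsb).2 ⟨c * r 0, by rw [hc, smul_smul]⟩⟩, ?_⟩
  rintro ⟨Q₁, Q₂⟩ ⟨hd, hu, h0, a, b, ha, ha', hsa, hb, hb', hsb, heq⟩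
  have hQ : IsCompl Q₁ Q₂ :=
    ⟨hd, by rwa [codisjoint_iff, Finset.sup_eq_union, Finset.top_eq_univ]⟩
  obtain ⟨c, hc⟩ := (hsame hsa hsb).1 heq
  have hQ₁ : Q₁ = s := Finset.eq_filter_of_sub_eq_smul_of_isCompl hQ ha ha' hb hb' hc h0
  rw [← hQ.compl_eq, hQ₁]
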